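/- For every p ∈ ℕ^ℕ, let DIS|_[p] denote the restriction of the discontinuity problem DIS to the Turing cone [p] := {q ∈ ℕ^ℕ : p ≤_T q} (i.e., dom(DIS|_[p]) = [p] and DIS|_[p](q) = DIS(q) for q ∈ [p]). Then DIS ≤*_W DIS|_[p]; in particular DIS|_[p] is effectively discontinuous. -/

import Mathlib

noncomputable section

/-- Baire space `ℕ^ℕ`. -/
abbrev Baire : Type := ℕ → ℕ

/-- The Cantor pairing `⟨n,k⟩ = (n+k)(n+k+1)/2 + k`. -/
def cpair (n k : ℕ) : ℕ := (n + k) * (n + k + 1) / 2 + k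

/-- The inverse of the Cantor pairing. -/
noncomputable def cunpair (m : ℕ) : ℕ × ℕ :=
  Classical.epsilon fun x : ℕ × ℕ => cpair x.1 x.2 = m

/-- A fixed bijective numbering `w : ℕ → List ℕ` of finite words. -/
def word (n : ℕ) : List ℕ := Denumerable.ofNat (List ℕ) n

/-- `l` is a finite prefix of the infinite sequence `p`. -/
def IsPrefixOf (l : List ℕ) (p : Baire) : Prop := l = (List.range l.length).map p

/-- Two words are comparable in the prefix order. -/
def WordComparable (u v : List ℕ) : Prop := u <+: v ∨ v <+: u

/-- The word `w(n_i)` decoded from the `i`-th entry of the code `q`. -/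
noncomputable def wn (q : Baire) (i : ℕ) : List ℕ := word (cunpair (q i)).1

/-- The word `w(k_i)` decoded from the `i`-th entry of the code `q`. -/
noncomputable def wk (q : Baire) (i : ℕ) : List ℕ := word (cunpair (q i)).2

/-- The code `q` is consistent. -/
def ConsistentCode (q : Baire) : Prop :=
  ∀ i j, WordComparable (wn q i) (wn q j) → WordComparable (wk q i) (wk q j)

/-- The continuous partial function `Φ_q :⊆ ℕ^ℕ → ℕ^ℕ` coded by `q`. -/
noncomputable def Phi (q : Baire) : Baire →. Baire := fun p =>
  ⟨ConsistentCode q ∧ ∀ m : ℕ, ∃ i, IsPrefixOf (wn q i) p ∧ m < (wk q i).length,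
   fun _ => Classical.epsilon fun x : Baire =>
      ∀ i, IsPrefixOf (wn q i) p → IsPrefixOf (wk q i) x⟩

/-- The pairing `⟨q,p⟩` on Baire space. -/
def bpair (q p : Baire) : Baire := fun n => if n % 2 = 0 then q (n / 2) else p (n / 2)

/-- Even part of a sequence. -/
def evens (r : Baire) : Baire := fun n => r (2 * n)

/-- Odd part of a sequence. -/
def odds (r : Baire) : Baire := fun n => r (2 * n + 1)

/-- The universal function `U(⟨q,p⟩) = Φ_q(p)`. -/
noncomputable def U : Baire →. Baire := fun r => Phi (evens r) (odds r)

/-- `h` is monotone for the prefix order. -/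
def MonotoneWord (h : List ℕ → List ℕ) : Prop := ∀ u v, u <+: v → h u <+: h v

/-- `h` approximates the partial function `F`. -/
def Approximates (h : List ℕ → List ℕ) (F : Baire →. Baire) : Prop :=
  ∀ p, ∀ hp : (F p).Dom,
    (∀ v, IsPrefixOf v p → IsPrefixOf (h v) ((F p).get hp)) ∧
    (∀ m : ℕ, ∃ v, IsPrefixOf v p ∧ m < (h v).length)

/-- `F :⊆ ℕ^ℕ → ℕ^ℕ` is continuous: some monotone word function approximates it. -/
def ContinuousPF (F : Baire →. Baire) : Prop := ∃ h, MonotoneWord h ∧ Approximates h F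

/-- `F :⊆ ℕ^ℕ → ℕ^ℕ` is computable: some computable monotone word function approximates it. -/
def ComputablePF (F : Baire →. Baire) : Prop :=
  ∃ h, Computable h ∧ MonotoneWord h ∧ Approximates h F

/-- A total function is computable iff it is computable as a partial function with full domain. -/
def ComputableTotal (F : Baire → Baire) : Prop := ComputablePF fun p => Part.some (F p)

/-- A problem (multivalued function on Baire space). -/
abbrev Problem : Type := Baire → Set Baire

/-- `F` is a realizer of the problem `f`. -/
def Realizes (F : Baire →. Baire) (f : Problem) : Prop :=
  ∀ p, (f p).Nonempty → ∃ h : (F p).Dom, (F p).get h ∈ f p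

/-- `f` is continuous: it has a continuous realizer. -/
def ContinuousProblem (f : Problem) : Prop := ∃ F, ContinuousPF F ∧ Realizes F f

/-- The discontinuity problem `DIS`. -/
noncomputable def DIS : Problem := fun p => {q | q ∉ U p}

/-- `D` is a discontinuity function for `f`. -/
def DiscontinuityFunction (D : Baire → Baire) (f : Problem) : Prop :=
  ∀ q, (f (D q)).Nonempty ∧ ∀ y ∈ Phi q (D q), y ∉ f (D q)

/-- `f` is computably discontinuous. -/
def ComputablyDiscontinuous (f : Problem) : Prop :=
  ∃ D, ComputableTotal D ∧ DiscontinuityFunction D f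

/-- `f` is effectively discontinuous. -/
def EffectivelyDiscontinuous (f : Problem) : Prop :=
  ∃ D : Baire → Baire, Continuous D ∧ DiscontinuityFunction D f

/-- Weihrauch reducibility `f ≤_W g`. -/
def WeihrauchRed (f g : Problem) : Prop :=
  ∃ H K : Baire →. Baire, ComputablePF H ∧ ComputablePF K ∧
    ∀ G : Baire →. Baire, Realizes G g →
      Realizes (fun p => (K p).bind fun s => (G s).bind fun t => H (bpair p t)) f

/-- Strong Weihrauch reducibility `f ≤_sW g`. -/
def StrongWeihrauchRed (f g : Problem) : Prop :=
  ∃ H K : Baire →. Baire, ComputablePF H ∧ ComputablePF K ∧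
    ∀ G : Baire →. Baire, Realizes G g →
      Realizes (fun p => (K p).bind fun s => (G s).bind fun t => H t) f

/-- Continuous Weihrauch reducibility `f ≤*_W g`. -/
def ContWeihrauchRed (f g : Problem) : Prop :=
  ∃ H K : Baire →. Baire, ContinuousPF H ∧ ContinuousPF K ∧
    ∀ G : Baire →. Baire, Realizes G g →
      Realizes (fun p => (K p).bind fun s => (G s).bind fun t => H (bpair p t)) f

/-- Continuous strong Weihrauch reducibility `f ≤*_sW g`. -/
def ContStrongWeihrauchRed (f g : Problem) : Prop :=
  ∃ H K : Baire →. Baire, ContinuousPF H ∧ ContinuousPF K ∧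
    ∀ G : Baire →. Baire, Realizes G g →
      Realizes (fun p => (K p).bind fun s => (G s).bind fun t => H t) f

/-- Concatenation of the first `n` moves. -/
def concatN (ms : ℕ → List ℕ) (n : ℕ) : List ℕ := ((List.range n).map ms).flatten

/-- The concatenated play is infinite. -/
def PlayInf (ms : ℕ → List ℕ) : Prop := ∀ m : ℕ, ∃ n, m < (concatN ms n).length

/-- The infinite sequence determined by an infinite play. -/
noncomputable def playLim (ms : ℕ → List ℕ) : Baire :=
  Classical.epsilon fun p : Baire => ∀ n, IsPrefixOf (concatN ms n) p

/-- Player II wins the run of the Wadge game of `f` given by the moves `xs` of I and `ys` of II. -/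
def WadgeIIWins (f : Problem) (xs ys : ℕ → List ℕ) : Prop :=
  (PlayInf xs ∧ (f (playLim xs)).Nonempty) → (PlayInf ys ∧ playLim ys ∈ f (playLim xs))

/-- The list of first `n` moves. -/
def histW (xs : ℕ → List ℕ) (n : ℕ) : List (List ℕ) := (List.range n).map xs

/-- `σ` is a winning strategy for Player II in the Wadge game of `f`. -/
def WadgeWinningII (f : Problem) (σ : List (List ℕ) → List ℕ) : Prop :=
  ∀ xs : ℕ → List ℕ, WadgeIIWins f xs fun i => σ (histW xs (i + 1))

/-- `σ` is a winning strategy for Player I in the Wadge game of `f`. -/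
def WadgeWinningI (f : Problem) (σ : List (List ℕ) → List ℕ) : Prop :=
  ∀ ys : ℕ → List ℕ, ¬ WadgeIIWins f (fun i => σ (histW ys i)) ys

/-- The list of first `n` values of a sequence. -/
def histN (x : Baire) (n : ℕ) : List ℕ := (List.range n).map x

/-- Player II wins the run `(x,y)` of the Lipschitz game of `f`. -/
def LipIIWins (f : Problem) (x y : Baire) : Prop := (f x).Nonempty → y ∈ f x

/-- `σ` is a winning strategy for Player II in the Lipschitz game of `f`. -/
def LipWinningII (f : Problem) (σ : List ℕ → ℕ) : Prop :=
  ∀ x : Baire, LipIIWins f x fun i => σ (histN x (i + 1))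

/-- `σ` is a winning strategy for Player I in the Lipschitz game of `f`. -/
def LipWinningI (f : Problem) (σ : List ℕ → ℕ) : Prop :=
  ∀ y : Baire, ¬ LipIIWins f (fun i => σ (histN y i)) y

/-- `σ` is a winning strategy for Player II in the Gale–Stewart game `A`. -/
def GSWinningII (A : Set Baire) (σ : List ℕ → ℕ) : Prop :=
  ∀ x : Baire, bpair x (fun i => σ (histN x (i + 1))) ∈ A

/-- `σ` is a winning strategy for Player I in the Gale–Stewart game `A`. -/
def GSWinningI (A : Set Baire) (σ : List ℕ → ℕ) : Prop :=
  ∀ y : Baire, bpair (fun i => σ (histN y i)) y ∉ A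

/-- The totalization `Tf` of `f`. -/
def Totalization (f : Problem) : Problem := fun p => {q | (f p).Nonempty → q ∈ f p}

/-- The paired graph `⟨graph(Tf)⟩ ⊆ ℕ^ℕ`. -/
def pairedGraph (f : Problem) : Set Baire :=
  {r | ∃ x y : Baire, r = bpair x y ∧ y ∈ Totalization f x}

/-- Domain of the word concatenation map `w*`. -/
def wstarDom (p : Baire) : Prop := PlayInf fun i => word (p i)

/-- The word concatenation map `w* : p ↦ w(p 0) w(p 1) ⋯` (on its domain). -/
noncomputable def wstar (p : Baire) : Baire := playLim fun i => word (p i)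

/-- The problem `f^w = w*⁻¹ ∘ f ∘ w*`. -/
noncomputable def wordLift (f : Problem) : Problem := fun p =>
  {q | wstarDom p ∧ (f (wstar p)).Nonempty ∧ wstarDom q ∧ wstar q ∈ f (wstar p)}

/-- The `i`-th component of a tupled sequence. -/
def tupleComp (p : Baire) (i : ℕ) : Baire := fun n => p (cpair i n)

/-- The parallelization `⟨f⟩` of `f`. -/
def Parallelization (f : Problem) : Problem := fun p =>
  {q | ∀ i, tupleComp q i ∈ f (tupleComp p i)}

/-- Turing reducibility: `p` is computable relative to the oracle `q`. -/
def TuringLe (p q : Baire) : Prop := ∃ F : Baire →. Baire, ComputablePF F ∧ p ∈ F q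

end

/-! For `x` with `x = bpair (bpair q c) x`, where every entry of the code `c` emits the
empty word, the universal function gives `U(x) = Φ_q(x)`; so every solution of `DIS(x)` differs
from `Φ_q(x)`. Choosing the entries of `c` to be `⟨p n, 0⟩` makes `p` computable from `x`,
which puts `x` in the cone `[p]` and makes `q ↦ x` a discontinuity function for `DIS|_[p]`.
For the reduction, replace the input `r` of `DIS` by the code `constCode r`, which emits on
every input the words that `U` emits on `r`: then `Φ_{constCode r} = U(r)` wherever `U(r)` is
defined, and a solution of `DIS|_[p]` at the corresponding `x` differs from `U(r)`. -/

open PiNat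

/-- Recovers `n + k` from `⟨n, k⟩`, since `(2(n+k)+1)² ≤ 8⟨n,k⟩ + 1 < (2(n+k)+3)²`. -/
def cpairSum (m : ℕ) : ℕ := (Nat.sqrt (8 * m + 1) - 1) / 2

lemma cpairSum_cpair (a b : ℕ) : cpairSum (cpair a b) = a + b := by
  obtain ⟨s, hs⟩ : ∃ s, s = a + b := ⟨_, rfl⟩
  have htri : 2 * (s * (s + 1) / 2) = s * (s + 1) :=
    Nat.mul_div_cancel' (Nat.even_mul_succ_self s).two_dvd
  have hcode : 8 * cpair a b + 1 = (2 * s + 1) * (2 * s + 1) + 8 * b := by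
    unfold cpair; rw [← hs]; nlinarith
  have hlo : 2 * s + 1 ≤ Nat.sqrt (8 * cpair a b + 1) := Nat.le_sqrt.mpr (by omega)
  have hhi : Nat.sqrt (8 * cpair a b + 1) < 2 * s + 3 := Nat.sqrt_lt.mpr (by nlinarith)
  unfold cpairSum
  omega

lemma primrec_cpairSum : Primrec cpairSum :=
  Primrec.nat_div.comp (Primrec.nat_sub.comp (Primrec.nat_sqrt.comp
    (Primrec.nat_add.comp (Primrec.nat_mul.comp (Primrec.const 8) Primrec.id) (Primrec.const 1)))
    (Primrec.const 1)) (Primrec.const 2)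

lemma cpair_injective2 : Function.Injective2 cpair := by
  intro a c b d h
  have hsum : a + b = c + d := by rw [← cpairSum_cpair, h, cpairSum_cpair]
  unfold cpair at h
  rw [hsum] at h
  omega

@[simp]
lemma cunpair_cpair (a b : ℕ) : cunpair (cpair a b) = (a, b) := by
  have h := Classical.epsilon_spec
    (p := fun x : ℕ × ℕ => cpair x.1 x.2 = cpair a b) ⟨(a, b), rfl⟩
  exact Prod.ext (cpair_injective2 h).1 (cpair_injective2 h).2

@[simp]
lemma word_zero : word 0 = [] := by simp [word]

lemma range_prefix_range {a b : ℕ} (hab : a ≤ b) : List.range a <+: List.range b := by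
  rw [← Nat.min_eq_left hab, ← List.take_range]
  exact List.take_prefix _ _

lemma isPrefixOf_iff {v : List ℕ} {x : Baire} :
    IsPrefixOf v x ↔ ∀ i (hi : i < v.length), v[i] = x i := by
  simp [IsPrefixOf, List.ext_getElem_iff]

@[simp]
lemma isPrefixOf_nil (x : Baire) : IsPrefixOf [] x := rfl

lemma isPrefixOf_map_range_iff {f x : Baire} {n : ℕ} :
    IsPrefixOf ((List.range n).map f) x ↔ x ∈ cylinder f n := by
  simp [isPrefixOf_iff, mem_cylinder_iff, eq_comm]

lemma IsPrefixOf.getD_eq {v : List ℕ} {x : Baire} (h : IsPrefixOf v x) {i : ℕ}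
    (hi : i < v.length) : v.getD i 0 = x i := by
  rw [List.getD_eq_getElem _ _ hi, isPrefixOf_iff.mp h i hi]

lemma IsPrefixOf.of_prefix {u v : List ℕ} {x : Baire} (huv : u <+: v) (h : IsPrefixOf v x) :
    IsPrefixOf u x :=
  isPrefixOf_iff.mpr fun i hi => by
    rw [huv.getElem hi]; exact isPrefixOf_iff.mp h i _

lemma IsPrefixOf.congr_cylinder {v : List ℕ} {x y : Baire} (h : IsPrefixOf v x)
    (hy : y ∈ cylinder x v.length) : IsPrefixOf v y :=
  isPrefixOf_iff.mpr fun i hi => (isPrefixOf_iff.mp h i hi).trans (mem_cylinder_iff.mp hy i hi).symm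

lemma IsPrefixOf.wordComparable {u v : List ℕ} {x : Baire} (hu : IsPrefixOf u x)
    (hv : IsPrefixOf v x) : WordComparable u v := by
  rcases le_total u.length v.length with h | h
  · left; rw [hu, hv]; exact ((range_prefix_range h).map x)
  · right; rw [hu, hv]; exact ((range_prefix_range h).map x)

lemma wordComparable_nil_left (u : List ℕ) : WordComparable [] u := Or.inl List.nil_prefix

lemma wordComparable_nil_right (u : List ℕ) : WordComparable u [] := Or.inr List.nil_prefix

lemma map_range_prefix {a b : ℕ} {f g : Baire} (hab : a ≤ b) (h : g ∈ cylinder f a) :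
    (List.range a).map f <+: (List.range b).map g := by
  rw [List.map_congr_left fun n hn => (mem_cylinder_iff.mp h n (List.mem_range.mp hn)).symm]
  exact (range_prefix_range hab).map g

lemma exists_cylinder_subset {s : Set Baire} (hs : IsOpen s) {x : Baire} (hx : x ∈ s) :
    ∃ n, cylinder x n ⊆ s := by
  obtain ⟨_, ⟨y, n, rfl⟩, hxy, hsub⟩ :=
    (isTopologicalBasis_cylinders _).mem_nhds_iff.mp (hs.mem_nhds hx)
  exact ⟨n, (mem_cylinder_iff_eq.mp hxy).symm ▸ hsub⟩

lemma continuous_of_forall_exists_cylinder {f : Baire → ℕ}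
    (h : ∀ x, ∃ n, ∀ y ∈ cylinder x n, f y = f x) : Continuous f := by
  refine continuous_discrete_rng.mpr fun b => isOpen_iff_mem_nhds.mpr fun x hx => ?_
  obtain ⟨n, hn⟩ := h x
  exact Filter.mem_of_superset ((isOpen_cylinder _ x n).mem_nhds (self_mem_cylinder x n))
    fun y hy => (hn y hy).trans hx

def padZero (v : List ℕ) : Baire := fun n => v.getD n 0

lemma isPrefixOf_padZero (v : List ℕ) : IsPrefixOf v (padZero v) :=
  isPrefixOf_iff.mpr fun _ hi => (List.getD_eq_getElem _ _ hi).symm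

noncomputable section Modulus

open scoped Classical

variable (F : Baire → Baire)

def IsStableOn (v : List ℕ) (L : ℕ) : Prop :=
  ∀ x, IsPrefixOf v x → F x ∈ cylinder (F (padZero v)) L

def modulus (v : List ℕ) : ℕ := Nat.findGreatest (IsStableOn F v) v.length

def approxWord (v : List ℕ) : List ℕ := (List.range (modulus F v)).map (F (padZero v))

lemma isStableOn_modulus (v : List ℕ) : IsStableOn F v (modulus F v) :=
  Nat.findGreatest_spec (Nat.zero_le _) fun _ _ _ h => absurd h (Nat.not_lt_zero _)

lemma IsStableOn.of_prefix {u v : List ℕ} {L : ℕ} (h : IsStableOn F u L) (huv : u <+: v) :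
    IsStableOn F v L := by
  intro x hx
  have hx' := h x (hx.of_prefix huv)
  have hv := h _ ((isPrefixOf_padZero v).of_prefix huv)
  rw [mem_cylinder_iff_eq] at hx' hv ⊢
  rw [hx', hv]

lemma modulus_mono {u v : List ℕ} (huv : u <+: v) : modulus F u ≤ modulus F v :=
  Nat.le_findGreatest ((Nat.findGreatest_le _).trans huv.length_le)
    ((isStableOn_modulus F u).of_prefix F huv)

lemma monotoneWord_approxWord : MonotoneWord (approxWord F) := fun u v huv =>
  map_range_prefix (modulus_mono F huv)
    ((isStableOn_modulus F u) _ ((isPrefixOf_padZero v).of_prefix huv))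

lemma isPrefixOf_approxWord {v : List ℕ} {x : Baire} (h : IsPrefixOf v x) :
    IsPrefixOf (approxWord F v) (F x) :=
  isPrefixOf_map_range_iff.mpr (isStableOn_modulus F v x h)

lemma exists_le_modulus (hF : Continuous F) (x : Baire) (m : ℕ) :
    ∃ v, IsPrefixOf v x ∧ m ≤ modulus F v := by
  obtain ⟨n, hn⟩ := exists_cylinder_subset ((isOpen_cylinder _ (F x) m).preimage hF)
    (self_mem_cylinder (F x) m)
  set v := (List.range (max n m)).map x
  have hv : ∀ y, IsPrefixOf v y → F y ∈ cylinder (F x) m := fun y hy =>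
    hn (cylinder_anti x (le_max_left n m) (isPrefixOf_map_range_iff.mp hy))
  refine ⟨v, isPrefixOf_map_range_iff.mpr (self_mem_cylinder x _), ?_⟩
  refine Nat.le_findGreatest (by simp [v]) fun y hy => ?_
  have h1 := hv y hy
  have h2 := hv _ (isPrefixOf_padZero v)
  rw [mem_cylinder_iff_eq] at h1 h2 ⊢
  rw [h1, h2]

end Modulus

lemma continuousPF_of_continuous {F : Baire → Baire} (hF : Continuous F) :
    ContinuousPF fun x => Part.some (F x) :=
  ⟨approxWord F, monotoneWord_approxWord F, fun x _ =>
    ⟨fun _ hv => isPrefixOf_approxWord F hv, fun m => by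
      obtain ⟨v, hv, hm⟩ := exists_le_modulus F hF x (m + 1)
      exact ⟨v, hv, by simpa [approxWord] using hm⟩⟩⟩

lemma computablePF_sample {g : ℕ → ℕ} (hg : Primrec g) {a b : ℕ} (hb : b < a) :
    ComputablePF fun x => Part.some fun n => g (x (a * n + b)) := by
  have hidx : ∀ L k, k < L / a → a * k + b < L := fun L k hk => by
    have := Nat.mul_le_of_le_div a (k + 1) L hk
    rw [mul_comm] at this; nlinarith
  refine ⟨fun v => (List.range (v.length / a)).map fun k => g (v.getD (a * k + b) 0), ?_,
    fun u v huv => ?_, fun x _ => ⟨fun v hv => ?_, fun m => ?_⟩⟩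
  · exact Primrec.to_comp <| Primrec.list_map
      (Primrec.list_range.comp (Primrec.nat_div.comp Primrec.list_length (Primrec.const a)))
      (hg.comp ((Primrec.list_getD 0).comp Primrec.fst
        (Primrec.nat_add.comp (Primrec.nat_mul.comp (Primrec.const a) Primrec.snd)
          (Primrec.const b)))).to₂
  · refine map_range_prefix (Nat.div_le_div_right huv.length_le)
      (mem_cylinder_iff.mpr fun k hk => ?_)
    rw [List.getD_eq_getElem _ _ (hidx _ _ hk), List.getD_eq_getElem _ _
      ((hidx _ _ hk).trans_le huv.length_le), huv.getElem]
  · exact isPrefixOf_map_range_iff.mpr (mem_cylinder_iff.mpr fun k hk => by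
      rw [hv.getD_eq (hidx _ _ hk)]; rfl)
  · refine ⟨(List.range (a * (m + 1))).map x,
      isPrefixOf_map_range_iff.mpr (self_mem_cylinder _ _), ?_⟩
    simp [Nat.mul_div_cancel_left _ (b.zero_le.trans_lt hb)]

@[simp]
lemma bpair_two_mul (q c : Baire) (i : ℕ) : bpair q c (2 * i) = q i := by
  simp [bpair]

@[simp]
lemma bpair_two_mul_add_one (q c : Baire) (i : ℕ) : bpair q c (2 * i + 1) = c i := by
  simp [bpair, Nat.add_mod, Nat.add_div]

@[simp]
lemma odds_bpair (q c : Baire) : odds (bpair q c) = c :=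
  funext fun _ => bpair_two_mul_add_one ..

lemma continuous_odds : Continuous odds := continuous_pi fun _ => continuous_apply _

lemma continuous_bpair_left (c : Baire) : Continuous fun q => bpair q c :=
  continuous_pi fun n => by unfold bpair; split_ifs <;> fun_prop

/-- The solution `x` of `x = bpair r x`. -/
def bpairFix (r : Baire) : Baire
  | n => if n % 2 = 0 then r (n / 2) else bpairFix r (n / 2)
  decreasing_by omega

@[simp]
lemma evens_bpairFix (r : Baire) : evens (bpairFix r) = r :=
  funext fun n => by rw [evens, bpairFix]; simp

@[simp]
lemma odds_bpairFix (r : Baire) : odds (bpairFix r) = bpairFix r :=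
  funext fun n => by rw [odds, bpairFix]; simp [Nat.add_mod, Nat.add_div]

lemma exists_bpairFix_eq_apply (n : ℕ) : ∃ m, ∀ r, bpairFix r n = r m := by
  induction n using Nat.strong_induction_on with
  | _ n ih =>
    by_cases h : n % 2 = 0
    · exact ⟨n / 2, fun r => by rw [bpairFix, if_pos h]⟩
    · obtain ⟨m, hm⟩ := ih (n / 2) (by omega)
      exact ⟨m, fun r => by rw [bpairFix, if_neg h, hm]⟩

lemma continuous_bpairFix : Continuous bpairFix :=
  continuous_pi fun n => by
    obtain ⟨m, hm⟩ := exists_bpairFix_eq_apply n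
    simpa only [hm] using continuous_apply m

def Outputs (q y : Baire) : Set (List ℕ) := {w | ∃ i, IsPrefixOf (wn q i) y ∧ wk q i = w}

lemma forall_isPrefixOf_wk_of_outputs {q q' y y' z : Baire}
    (hout : ∀ w ≠ [], w ∈ Outputs q y → w ∈ Outputs q' y')
    (h : ∀ i, IsPrefixOf (wn q' i) y' → IsPrefixOf (wk q' i) z) :
    ∀ i, IsPrefixOf (wn q i) y → IsPrefixOf (wk q i) z := by
  intro i hi
  by_cases hw : wk q i = []
  · rw [hw]; exact isPrefixOf_nil z
  · obtain ⟨j, hj, hwj⟩ := hout _ hw ⟨i, hi, rfl⟩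
    exact hwj ▸ h j hj

lemma mem_Phi_of_outputs {q q' y y' z : Baire} (hcons : ConsistentCode q → ConsistentCode q')
    (hout : ∀ w ≠ [], w ∈ Outputs q y ↔ w ∈ Outputs q' y') (hz : z ∈ Phi q y) :
    z ∈ Phi q' y' := by
  obtain ⟨⟨hc, hunb⟩, rfl⟩ := hz
  refine ⟨⟨hcons hc, fun m => ?_⟩, ?_⟩
  · obtain ⟨i, hi, hm⟩ := hunb m
    obtain ⟨j, hj, hwj⟩ := (hout _ (List.ne_nil_of_length_pos (by omega))).mp ⟨i, hi, rfl⟩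
    exact ⟨j, hj, hwj ▸ hm⟩
  · show Classical.epsilon _ = Classical.epsilon _
    congr 1
    funext z
    exact propext ⟨forall_isPrefixOf_wk_of_outputs fun w hw => (hout w hw).mp,
      forall_isPrefixOf_wk_of_outputs fun w hw => (hout w hw).mpr⟩

def inertCode (p : Baire) : Baire := fun n => cpair (p n) 0

lemma wk_inertCode (p : Baire) (n : ℕ) : wk (inertCode p) n = [] := by
  simp [wk, inertCode]

lemma mem_Phi_bpair_of_inert {q c y z : Baire} (hc : ∀ n, wk c n = []) (hz : z ∈ Phi q y) :
    z ∈ Phi (bpair q c) y := by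
  have hwn (i) : wn (bpair q c) (2 * i) = wn q i := by simp [wn]
  have hwk (i) : wk (bpair q c) (2 * i) = wk q i := by simp [wk]
  have hwk' (i) : wk (bpair q c) (2 * i + 1) = [] := by
    simp only [wk, bpair_two_mul_add_one]; exact hc i
  refine mem_Phi_of_outputs (fun h i j hij => ?_) (fun w hw => ⟨?_, ?_⟩) hz
  · obtain ⟨a, rfl | rfl⟩ := Nat.even_or_odd' i <;>
      obtain ⟨b, rfl | rfl⟩ := Nat.even_or_odd' j
    · rw [hwn, hwn] at hij; rw [hwk, hwk]; exact h a b hij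
    all_goals
      simp only [hwk']
      first | exact wordComparable_nil_left _ | exact wordComparable_nil_right _
  · rintro ⟨i, hi, rfl⟩
    exact ⟨2 * i, (hwn i).symm ▸ hi, hwk i⟩
  · rintro ⟨i, hi, rfl⟩
    obtain ⟨a, rfl | rfl⟩ := Nat.even_or_odd' i
    · exact ⟨a, hwn a ▸ hi, (hwk a).symm⟩
    · exact absurd (hwk' a) hw

def coneDiag (p q : Baire) : Baire := bpairFix (bpair q (inertCode p))

lemma mem_U_coneDiag {p q z : Baire} (hz : z ∈ Phi q (coneDiag p q)) :
    z ∈ U (coneDiag p q) := by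
  unfold U
  rw [coneDiag, evens_bpairFix, odds_bpairFix]
  exact mem_Phi_bpair_of_inert (wk_inertCode p) hz

lemma turingLe_coneDiag (p q : Baire) : TuringLe p (coneDiag p q) := by
  refine ⟨_, computablePF_sample primrec_cpairSum (a := 4) (b := 2) (by norm_num),
    Part.mem_some_iff.mpr (funext fun n => ?_)⟩
  have h := congrFun (evens_bpairFix (bpair q (inertCode p))) (2 * n + 1)
  rw [evens, show 2 * (2 * n + 1) = 4 * n + 2 by ring, bpair_two_mul_add_one] at h
  rw [coneDiag, h, inertCode, cpairSum_cpair, add_zero]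

lemma continuous_coneDiag (p : Baire) : Continuous (coneDiag p) :=
  continuous_bpairFix.comp (continuous_bpair_left _)

open Classical in
noncomputable def constCode (x : Baire) : Baire := fun i =>
  cpair 0 (if IsPrefixOf (wn (evens x) i) (odds x) then (cunpair (evens x i)).2 else 0)

lemma wn_constCode (x : Baire) (i : ℕ) : wn (constCode x) i = [] := by
  simp [wn, constCode]

open Classical in
lemma wk_constCode (x : Baire) (i : ℕ) :
    wk (constCode x) i = if IsPrefixOf (wn (evens x) i) (odds x) then wk (evens x) i else [] := by
  simp only [wk, constCode, cunpair_cpair]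
  split_ifs <;> simp

lemma mem_Phi_constCode {x z : Baire} (y : Baire) (hz : z ∈ U x) : z ∈ Phi (constCode x) y := by
  refine mem_Phi_of_outputs (fun h i j _ => ?_) (fun w hw => ⟨?_, ?_⟩) hz
  · rw [wk_constCode, wk_constCode]
    split_ifs with hi hj
    · exact h i j (hi.wordComparable hj)
    all_goals first | exact wordComparable_nil_left _ | exact wordComparable_nil_right _
  · rintro ⟨i, hi, rfl⟩
    exact ⟨i, (wn_constCode x i).symm ▸ isPrefixOf_nil y, by rw [wk_constCode, if_pos hi]⟩
  · rintro ⟨i, -, hwi⟩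
    rw [wk_constCode] at hwi
    split_ifs at hwi with hi
    · exact ⟨i, hi, hwi⟩
    · exact absurd hwi.symm hw

open Classical in
lemma continuous_constCode : Continuous constCode := by
  refine continuous_pi fun i => continuous_of_forall_exists_cylinder fun x =>
    ⟨2 * i + 2 * (wn (evens x) i).length + 1, fun y hy => ?_⟩
  have hi : evens y i = evens x i := mem_cylinder_iff.mp hy _ (by omega)
  have hwn : wn (evens y) i = wn (evens x) i := by rw [wn, hi, wn]
  have hodds : odds y ∈ cylinder (odds x) (wn (evens x) i).length :=
    mem_cylinder_iff.mpr fun j hj => mem_cylinder_iff.mp hy _ (by omega)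
  have hpre : IsPrefixOf (wn (evens x) i) (odds y) ↔ IsPrefixOf (wn (evens x) i) (odds x) :=
    ⟨fun h => h.congr_cylinder ((mem_cylinder_comm _ _ _).mp hodds),
      fun h => h.congr_cylinder hodds⟩
  simp only [constCode]
  rw [hwn, hi, if_congr hpre rfl rfl]

lemma DIS_nonempty (x : Baire) : (DIS x).Nonempty := by
  by_cases h : (U x).Dom
  · refine ⟨fun n => (U x).get h n + 1, fun hmem => ?_⟩
    have := congrFun (Part.get_eq_of_mem hmem h) 0
    omega
  · exact ⟨fun _ => 0, fun hmem => h hmem.fst⟩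

lemma contWeihrauchRed_of_continuous {f g : Problem} {K : Baire → Baire} (hK : Continuous K)
    (hdom : ∀ x, (f x).Nonempty → (g (K x)).Nonempty) (hsol : ∀ x, g (K x) ⊆ f x) :
    ContWeihrauchRed f g := by
  refine ⟨fun r => Part.some (odds r), fun x => Part.some (K x),
    continuousPF_of_continuous continuous_odds, continuousPF_of_continuous hK,
    fun G hG x hx => ?_⟩
  obtain ⟨hd, hmem⟩ := hG (K x) (hdom x hx)
  simp only [Part.bind_some, odds_bpair, Part.bind_some_right]
  exact ⟨hd, hsol x hmem⟩

/-- `DIS ≤*_W DIS|_[p]`; in particular the restriction of `DIS` to the Turing cone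
`[p] = {q : p ≤_T q}` is effectively discontinuous. -/
theorem DIS_cone_effectively_discontinuous (p : Baire) :
    ContWeihrauchRed DIS (fun q => {r | TuringLe p q ∧ r ∈ DIS q}) ∧
    EffectivelyDiscontinuous (fun q => {r | TuringLe p q ∧ r ∈ DIS q}) := by
  have hne (q : Baire) : {r | TuringLe p (coneDiag p q) ∧ r ∈ DIS (coneDiag p q)}.Nonempty :=
    (DIS_nonempty _).imp fun _ hr => ⟨turingLe_coneDiag p q, hr⟩
  refine ⟨contWeihrauchRed_of_continuous ((continuous_coneDiag p).comp continuous_constCode)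
      (fun x _ => hne _) fun x t ht hx => ?_,
    coneDiag p, continuous_coneDiag p,
    fun q => ⟨hne q, fun y hy hmem => hmem.2 (mem_U_coneDiag hy)⟩⟩
  exact ht.2 (mem_U_coneDiag (mem_Phi_constCode _ hx))
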